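/- Let M→N be a matroid perspective on a finite linearly ordered ground set E. Then for all elements x, y, z of a commutative ring, Σ_{A⊆E} (x−1)^{r(N)−r_N(A)} · (y−1)^{|A|−r_M(A)} · z^{(r(M)−r_M(A))−(r(N)−r_N(A))} = Σ_{B} x^{|Int_N(B)|} · y^{|Ext_M(B)|} · z^{(r(M)−r_M(B))−(r(N)−r_N(B))}, where the second sum is over all B ⊆ E that are independent in M and spanning in N. -/

import Mathlib

/-!
Every `A ⊆ E` lies in exactly one interval `[B \ Int_N(B), B ∪ Ext_M(B)]` with `B` independent
in `M` and spanning in `N`. For existence, pick greedily (largest elements first) an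
`M`-independent `I ⊆ A` with every element of `A \ I` externally active, do the same for `N✶`
inside `Iᶜ`, and take `B` to be the complement of the result; `B` is `M`-independent because an
`M`-circuit in `B` would meet a cocircuit of `N` in a single internally active element, which a
perspective forbids. For uniqueness, strong circuit elimination shows that the smallest element
of a circuit inside `A` never lies in `B`, so `B = (A \ Q_M(A)) ∪ P_N(A)` is determined by `A`.
On the interval of `B` one has `r_M(A) = |A ∩ B|` and `r(N) - r_N(A) = |B \ A|`, so the summands
depend only on `Int_N(B) \ A` and `A ∩ Ext_M(B)`, and the binomial theorem sums the interval to
`x^|Int_N(B)| y^|Ext_M(B)| z^(…)`.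
-/

/-- A circuit of a matroid: a minimal dependent set. -/
def Matroid.IsCircuit' {α : Type*} (M : Matroid α) (C : Set α) : Prop :=
  M.Dep C ∧ ∀ D, M.Dep D → D ⊆ C → D = C

/-- A cocircuit of a matroid: a circuit of the dual matroid. -/
def Matroid.IsCocircuit' {α : Type*} (M : Matroid α) (C : Set α) : Prop :=
  M✶.IsCircuit' C

/-- The rank of a set in a matroid: the largest cardinality of an independent subset. -/
noncomputable def Matroid.rk' {α : Type*} (M : Matroid α) (A : Set α) : ℕ :=
  sSup {n : ℕ | ∃ I, I ⊆ A ∧ M.Indep I ∧ I.ncard = n}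

/-- `e` is the minimum element of the set `C`. -/
def IsMinOf {α : Type*} [LinearOrder α] (C : Set α) (e : α) : Prop :=
  e ∈ C ∧ ∀ x ∈ C, e ≤ x

/-- `Int_M(A)`: internally active elements of `A` w.r.t. `M`
(the ground set is the whole type, so `E ∖ A = Aᶜ`). -/
def IntSet {α : Type*} [LinearOrder α] (M : Matroid α) (A : Set α) : Set α :=
  {e | e ∈ A ∧ ∃ C, M.IsCocircuit' C ∧ C ⊆ Aᶜ ∪ {e} ∧ IsMinOf C e}

/-- `Ext_M(A)`: externally active elements w.r.t. `M`. -/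
def ExtSet {α : Type*} [LinearOrder α] (M : Matroid α) (A : Set α) : Set α :=
  {e | e ∉ A ∧ ∃ C, M.IsCircuit' C ∧ C ⊆ A ∪ {e} ∧ IsMinOf C e}

/-- `P_M(A)`: smallest elements of cocircuits of `M` contained in `E ∖ A`. -/
def PActSet {α : Type*} [LinearOrder α] (M : Matroid α) (A : Set α) : Set α :=
  {e | e ∉ A ∧ ∃ C, M.IsCocircuit' C ∧ C ⊆ Aᶜ ∧ IsMinOf C e}

/-- `Q_M(A)`: smallest elements of circuits of `M` contained in `A`. -/
def QActSet {α : Type*} [LinearOrder α] (M : Matroid α) (A : Set α) : Set α :=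
  {e | e ∈ A ∧ ∃ C, M.IsCircuit' C ∧ C ⊆ A ∧ IsMinOf C e}

open Set

theorem Finset.sum_Icc_pow_card_sdiff_mul_pow_card_inter {α R : Type*} [DecidableEq α]
    [CommSemiring R] {B I X : Finset α} (hIB : I ⊆ B) (hBX : Disjoint B X) (a b : R) :
    ∑ A ∈ Icc (B \ I) (B ∪ X), a ^ (I \ A).card * b ^ (A ∩ X).card =
      (a + 1) ^ I.card * (b + 1) ^ X.card := by
  have hIX : Disjoint I X := hBX.mono_left hIB
  have hmem : ∀ x ∈ X, x ∉ B := fun x hx hxB => disjoint_left.1 hBX hxB hx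
  have hU : (B ∪ X) \ (B \ I) = I ∪ X := by
    ext x
    simp only [mem_sdiff, mem_union]
    have := @hIB x
    have := hmem x
    tauto
  have hL : ∀ S ⊆ I ∪ X, Disjoint (B \ I) S := fun S hS => disjoint_left.2 fun x hx hxS =>
    (mem_union.1 (hS hxS)).elim (mem_sdiff.1 hx).2 fun h => hmem x h (mem_sdiff.1 hx).1
  rw [Icc_eq_image_powerset (sdiff_subset.trans subset_union_left), hU, sum_image]
  · calc ∑ S ∈ (I ∪ X).powerset, a ^ (I \ (B \ I ∪ S)).card *
            b ^ ((B \ I ∪ S) ∩ X).card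
        = ∑ S ∈ (I ∪ X).powerset, (∏ i ∈ S, if i ∈ X then b else 1) *
            ∏ i ∈ (I ∪ X) \ S, if i ∈ I then a else 1 := by
          refine sum_congr rfl fun S hS => ?_
          rw [prod_ite_mem, prod_ite_mem, prod_const, prod_const, mul_comm]
          congr 3 <;> ext x <;> simp only [mem_sdiff, mem_union, mem_inter] <;>
            have := hmem x <;> tauto
      _ = ∏ i ∈ I ∪ X, ((if i ∈ X then b else 1) + if i ∈ I then a else 1) :=
          (prod_add _ _ _).symm
      _ = (a + 1) ^ I.card * (b + 1) ^ X.card := by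
          rw [prod_union hIX,
            prod_eq_pow_card fun i hi => by
              rw [if_neg (disjoint_left.1 hIX hi), if_pos hi, add_comm],
            prod_eq_pow_card fun i hi => by rw [if_pos hi, if_neg (disjoint_right.1 hIX hi)]]
  · intro S hS T hT hST
    rw [mem_coe, mem_powerset] at hS hT
    rw [← union_sdiff_cancel_left (hL S hS), ← union_sdiff_cancel_left (hL T hT)]
    exact congrArg (· \ (B \ I)) hST

namespace Matroid

variable {α : Type*} {M N : Matroid α} {A B C I J X : Set α}

theorem isCircuit'_iff : M.IsCircuit' C ↔ M.IsCircuit C := by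
  rw [isCircuit_iff]
  rfl

theorem cast_rk' (hX : X.Finite) : (M.rk' X : ℕ∞) = M.eRk X := by
  obtain ⟨I, hI⟩ := M.exists_isBasis' X
  have hIfin := hX.subset hI.subset
  have hmax : IsGreatest {n | ∃ J, J ⊆ X ∧ M.Indep J ∧ J.ncard = n} I.ncard := by
    refine ⟨⟨I, hI.subset, hI.indep, rfl⟩, ?_⟩
    rintro _ ⟨J, hJX, hJ, rfl⟩
    have hle := hJ.encard_le_eRk_of_subset hJX
    rwa [← hI.encard_eq_eRk, ← hIfin.cast_ncard_eq, ← (hX.subset hJX).cast_ncard_eq,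
      Nat.cast_le] at hle
  rw [rk', hmax.csSup_eq, hIfin.cast_ncard_eq, hI.encard_eq_eRk]

theorem IsBasis'.rk'_eq_ncard (hI : M.IsBasis' I X) (hX : X.Finite) : M.rk' X = I.ncard := by
  rw [← Nat.cast_inj (R := ℕ∞), cast_rk' hX, (hX.subset hI.subset).cast_ncard_eq,
    hI.encard_eq_eRk]

theorem rk'_add_ncard_sdiff_of_isBasis_dual [Finite α] (hE : N.E = univ)
    (hJ : N✶.IsBasis J Aᶜ) :
    N.rk' A + (Aᶜ \ J).ncard = N.rk' univ := by
  have h := N.eRk_dual_add_eRank Aᶜ (by simp [hE])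
  rw [hE, sdiff_compl, univ_inter, hJ.eRk_eq_encard, ← eRk_univ_eq, ← cast_rk' (toFinite _),
    ← cast_rk' (toFinite _), ← (toFinite J).cast_ncard_eq,
    ← (toFinite Aᶜ).cast_ncard_eq] at h
  norm_cast at h
  rw [ncard_sdiff hJ.subset]
  have := ncard_le_ncard hJ.subset
  omega

theorem Spanning.dual_indep_compl (hE : M.E = univ) (hB : M.Spanning B) : M✶.Indep Bᶜ := by
  simpa [hE, compl_eq_univ_sdiff] using hB.compl_coindep

def IsPerspective (M N : Matroid α) : Prop :=
  ∀ ⦃C D : Set α⦄ ⦃e : α⦄, M.IsCircuit C → N.IsCocircuit D → C ∩ D ≠ {e}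

theorem isPerspective_of_forall_isFlat (hE : M.E = N.E) (hMN : ∀ F, N.IsFlat F → M.IsFlat F) :
    M.IsPerspective N := by
  intro C D e hC hD hCD
  set F := N.closure (N.E \ D)
  have hDF : ∀ x ∈ D, x ∉ F := by
    intro x hxD hxF
    obtain ⟨C', hC'sub, hC', hxC'⟩ := exists_isCircuit_of_mem_closure hxF (fun h => h.2 hxD)
    refine hC'.inter_isCocircuit_ne_singleton hD
      (eq_singleton_iff_unique_mem.2 ⟨⟨hxC', hxD⟩, ?_⟩)
    rintro y ⟨hyC', hyD⟩
    exact (hC'sub hyC').resolve_right fun h => h.2 hyD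
  have he : e ∈ C ∩ D := hCD ▸ rfl
  have hCF : C \ {e} ⊆ F := by
    rintro y ⟨hyC, hye⟩
    refine N.subset_closure _ sdiff_subset ⟨hE ▸ hC.subset_ground hyC, fun hyD => hye ?_⟩
    exact hCD ▸ (⟨hyC, hyD⟩ : y ∈ C ∩ D)
  have heF : e ∈ F := by
    rw [← (hMN F (N.isFlat_closure _)).closure]
    exact M.closure_subset_closure hCF (hC.mem_closure_sdiff_singleton_of_mem he.1)
  exact hDF e he.2 heF

theorem IsPerspective.dual (h : M.IsPerspective N) : N✶.IsPerspective M✶ := by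
  intro C D e hC hD hCD
  exact h (dual_isCocircuit_iff.1 hD) hC (by rwa [inter_comm])

end Matroid

section Activity

open Matroid

variable {α : Type*} [LinearOrder α] {M N K : Matroid α} {A B C I J : Set α} {e m : α}

theorem mem_extSet_iff :
    e ∈ ExtSet M A ↔ e ∉ A ∧ ∃ C, M.IsCircuit C ∧ C ⊆ insert e A ∧ IsMinOf C e := by
  simp [ExtSet, isCircuit'_iff, union_singleton]

theorem mem_qActSet_iff :
    e ∈ QActSet M A ↔ e ∈ A ∧ ∃ C, M.IsCircuit C ∧ C ⊆ A ∧ IsMinOf C e := by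
  simp [QActSet, isCircuit'_iff]

theorem intSet_eq_extSet_dual (M : Matroid α) (A : Set α) : IntSet M A = ExtSet M✶ Aᶜ := by
  ext e
  simp [IntSet, ExtSet, IsCocircuit']

theorem extSet_eq_intSet_dual (M : Matroid α) (A : Set α) : ExtSet M A = IntSet M✶ Aᶜ := by
  rw [intSet_eq_extSet_dual, dual_dual, compl_compl]

theorem pActSet_eq_qActSet_dual (M : Matroid α) (A : Set α) :
    PActSet M A = QActSet M✶ Aᶜ := by
  ext e
  simp [PActSet, QActSet, IsCocircuit']

theorem extSet_subset_closure (M : Matroid α) (I : Set α) : ExtSet M I ⊆ M.closure I := by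
  intro e he
  obtain ⟨heI, C, hC, hCI, he⟩ := mem_extSet_iff.1 he
  refine M.closure_subset_closure (fun x hx => ?_) (hC.mem_closure_sdiff_singleton_of_mem he.1)
  exact (hCI hx.1).resolve_left hx.2

theorem extSet_sdiff_subset_extSet (hIJ : I ⊆ J) : ExtSet M I \ J ⊆ ExtSet M J := by
  rintro e ⟨he, heJ⟩
  obtain ⟨-, C, hC, hCI, he⟩ := mem_extSet_iff.1 he
  exact mem_extSet_iff.2 ⟨heJ, C, hC, hCI.trans (insert_subset_insert hIJ), he⟩

theorem exists_indep_subset_sdiff_subset_extSet (K : Matroid α) (hA : A.Finite) (hAE : A ⊆ K.E) :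
    ∃ I ⊆ A, K.Indep I ∧ A \ I ⊆ ExtSet K I := by
  lift A to Finset α using hA
  induction A using Finset.induction_on_min with
  | empty => exact ⟨∅, by simp, K.empty_indep, by simp⟩
  | insert a s has ih =>
    rw [Finset.coe_insert, insert_subset_iff] at hAE
    rw [Finset.coe_insert]
    obtain ⟨I, hIs, hI, hsI⟩ := ih hAE.2
    have haI : a ∉ I := fun h => lt_irrefl a (has a (hIs h))
    by_cases hacl : a ∈ K.closure I
    · -- the fundamental circuit of `a` has minimum `a`, since `a` is below all of `s ⊇ I`
      have haExt : a ∈ ExtSet K I := by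
        refine mem_extSet_iff.2 ⟨haI, K.fundCircuit a I, hI.fundCircuit_isCircuit hacl haI,
          K.fundCircuit_subset_insert a I, K.mem_fundCircuit a I, fun y hy => ?_⟩
        obtain rfl | hyI := K.fundCircuit_subset_insert a I hy
        exacts [le_rfl, (has y (hIs hyI)).le]
      refine ⟨I, hIs.trans (subset_insert _ _), hI, ?_⟩
      rintro y ⟨rfl | hys, hyI⟩
      exacts [haExt, hsI ⟨hys, hyI⟩]
    · refine ⟨insert a I, insert_subset_insert hIs,
        (hI.insert_indep_iff_of_notMem haI).2 ⟨hAE.1, hacl⟩, ?_⟩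
      rintro y ⟨rfl | hys, hyI⟩
      · exact absurd (mem_insert y I) hyI
      exact extSet_sdiff_subset_extSet (subset_insert a I)
        ⟨hsI ⟨hys, fun h => hyI (.inr h)⟩, hyI⟩

theorem notMem_of_isMinOf_of_sdiff_subset_extSet [K.Finitary] (hI : K.Indep I) (hIA : I ⊆ A)
    (hA : A \ I ⊆ ExtSet K I) (hC : K.IsCircuit C) (hCA : C ⊆ A) (hm : IsMinOf C m) :
    m ∉ I := by
  induction hn : (C \ I).ncard using Nat.strong_induction_on generalizing C with
  | _ n ih =>
  intro hmI
  obtain ⟨e, heC, heI⟩ : (C \ I).Nonempty :=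
    sdiff_nonempty.2 fun h => hC.not_indep (hI.subset h)
  obtain ⟨-, Ce, hCe, hCeI, he⟩ := mem_extSet_iff.1 (hA ⟨hCA heC, heI⟩)
  have hmCe : m ∉ Ce := fun hmCe =>
    heI (le_antisymm (he.2 m hmCe) (hm.2 e heC) ▸ hmI)
  -- strong elimination removes `e` and keeps `m`, lowering `|C \ I|`
  obtain ⟨C', hC'sub, hC', hmC'⟩ := hC.strong_elimination hCe heC he.1 hm.1 hmCe
  have hC'Ce : ∀ x ∈ C', x ∉ C → x ∈ I := fun x hx hxC =>
    (hCeI ((hC'sub hx).1.resolve_left hxC)).resolve_left (hC'sub hx).2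
  refine ih _ ?_ hC' (fun x hx => ?_) ⟨hmC', fun x hx => ?_⟩ rfl hmI
  · rw [← hn]
    refine ncard_lt_ncard
      ⟨fun x hx => ⟨?_, hx.2⟩, fun h => (hC'sub (h ⟨heC, heI⟩).1).2 rfl⟩ hC.finite.sdiff
    by_contra hxC
    exact hx.2 (hC'Ce x hx.1 hxC)
  · by_cases hxC : x ∈ C
    exacts [hCA hxC, hIA (hC'Ce x hx hxC)]
  · by_cases hxC : x ∈ C
    · exact hm.2 x hxC
    exact (hm.2 e heC).trans (he.2 x ((hC'sub hx).1.resolve_left hxC))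

theorem qActSet_eq_sdiff [K.Finitary] (hI : K.Indep I) (hIA : I ⊆ A) (hA : A \ I ⊆ ExtSet K I) :
    QActSet K A = A \ I := by
  ext e
  refine ⟨fun he => ?_, fun he => ?_⟩
  · obtain ⟨heA, C, hC, hCA, hmin⟩ := mem_qActSet_iff.1 he
    exact ⟨heA, notMem_of_isMinOf_of_sdiff_subset_extSet hI hIA hA hC hCA hmin⟩
  · obtain ⟨-, C, hC, hCI, hmin⟩ := mem_extSet_iff.1 (hA he)
    exact mem_qActSet_iff.2 ⟨he.1, C, hC, hCI.trans (insert_subset he.1 hIA), hmin⟩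

theorem isBasis_of_sdiff_subset_extSet (hI : K.Indep I) (hIA : I ⊆ A) (hA : A \ I ⊆ ExtSet K I)
    (hAE : A ⊆ K.E) : K.IsBasis I A := by
  refine hI.isBasis_of_subset_of_subset_closure hIA fun e heA => ?_
  by_cases heI : e ∈ I
  · exact K.subset_closure I (hIA.trans hAE) heI
  · exact extSet_subset_closure K I (hA ⟨heA, heI⟩)

theorem compl_mem_Icc_dual (hA : A ∈ Icc (B \ IntSet N B) (B ∪ ExtSet M B)) :
    Aᶜ ∈ Icc (Bᶜ \ IntSet M✶ Bᶜ) (Bᶜ ∪ ExtSet N✶ Bᶜ) := by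
  rw [← extSet_eq_intSet_dual, ← intSet_eq_extSet_dual]
  refine ⟨fun x hx hxA => ?_, fun x hx => ?_⟩
  · exact (hA.2 hxA).elim hx.1 hx.2
  · by_contra h
    exact hx (hA.1 ⟨not_not.1 fun hxB => h (.inl hxB), fun hxI => h (.inr hxI)⟩)

namespace Matroid.IsPerspective

theorem sdiff_subset_extSet_inter (hMN : M.IsPerspective N)
    (hA : A ∈ Icc (B \ IntSet N B) (B ∪ ExtSet M B)) :
    A \ (A ∩ B) ⊆ ExtSet M (A ∩ B) := by
  rw [sdiff_self_inter]
  rintro e ⟨heA, heB⟩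
  obtain ⟨-, C, hC, hCB, he⟩ := mem_extSet_iff.1 ((hA.2 heA).resolve_left heB)
  refine mem_extSet_iff.2 ⟨fun h => heB h.2, C, hC, fun x hx => ?_, he⟩
  obtain rfl | hxB := hCB hx
  · exact mem_insert _ _
  refine mem_insert_of_mem _ ⟨hA.1 ⟨hxB, fun hxI => ?_⟩, hxB⟩
  obtain ⟨-, D, hD, hDB, hx'⟩ := mem_extSet_iff.1 ((intSet_eq_extSet_dual N B) ▸ hxI)
  by_cases heD : e ∈ D
  · exact heB (le_antisymm (he.2 x hx) (hx'.2 e heD) ▸ hxB)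
  refine hMN hC hD (eq_singleton_iff_unique_mem.2 ⟨⟨hx, hx'.1⟩, ?_⟩)
  rintro y ⟨hyC, hyD⟩
  obtain rfl | hyB := hCB hyC
  · exact absurd hyD heD
  exact (hDB hyD).resolve_right (not_not.2 hyB)

theorem exists_mem_Icc [Finite α] (hMN : M.IsPerspective N) (hME : M.E = univ)
    (hNE : N.E = univ) (A : Set α) :
    ∃ B, M.Indep B ∧ N.Spanning B ∧ A ∈ Icc (B \ IntSet N B) (B ∪ ExtSet M B) := by
  obtain ⟨I, hIA, hI, hAI⟩ :=
    exists_indep_subset_sdiff_subset_extSet M (toFinite A) (by simp [hME])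
  obtain ⟨J, hJI, hJ, hIJ⟩ :=
    exists_indep_subset_sdiff_subset_extSet N✶ (toFinite Iᶜ) (by simp [hNE])
  have hIJc : I ⊆ Jᶜ := fun x hxI hxJ => hJI hxJ hxI
  have hInt : Jᶜ \ I ⊆ IntSet N Jᶜ := by
    rw [intSet_eq_extSet_dual, compl_compl]
    rintro x ⟨hxJ, hxI⟩
    exact hIJ ⟨hxI, hxJ⟩
  refine ⟨Jᶜ, ?_, ?_, fun x hx => ?_, fun x hxA => ?_⟩
  · by_contra hdep
    obtain ⟨C, hCJ, hC⟩ := (dep_of_not_indep hdep (by simp [hME])).exists_isCircuit_subset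
    obtain ⟨p, hpC, hpI⟩ := not_subset.1 fun h => hC.not_indep (hI.subset h)
    obtain ⟨-, D, hD, hDJ, hp⟩ :=
      mem_extSet_iff.1 (intSet_eq_extSet_dual N Jᶜ ▸ hInt ⟨hCJ hpC, hpI⟩)
    refine hMN hC hD (eq_singleton_iff_unique_mem.2 ⟨⟨hpC, hp.1⟩, fun y hy => ?_⟩)
    exact (hDJ hy.2).resolve_right (not_not.2 (hCJ hy.1))
  · simpa [hNE, compl_eq_univ_sdiff] using Coindep.compl_spanning hJ
  · by_contra hxA
    exact hx.2 (hInt ⟨hx.1, fun hxI => hxA (hIA hxI)⟩)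
  · by_cases hxJ : x ∈ J
    · exact .inr (extSet_sdiff_subset_extSet hIJc ⟨hAI ⟨hxA, hJI hxJ⟩, not_not.2 hxJ⟩)
    · exact .inl hxJ

theorem sdiff_qActSet_union_pActSet_eq [Finite α] (hMN : M.IsPerspective N) (hNE : N.E = univ)
    (hB : M.Indep B) (hBN : N.Spanning B) (hA : A ∈ Icc (B \ IntSet N B) (B ∪ ExtSet M B)) :
    A \ QActSet M A ∪ PActSet N A = B := by
  have hQ : QActSet M A = A \ B := by
    rw [qActSet_eq_sdiff (hB.subset inter_subset_right) inter_subset_left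
      (hMN.sdiff_subset_extSet_inter hA), sdiff_self_inter]
  have hP : PActSet N A = B \ A := by
    rw [pActSet_eq_qActSet_dual, qActSet_eq_sdiff
      ((hBN.dual_indep_compl hNE).subset inter_subset_right) inter_subset_left
      (hMN.dual.sdiff_subset_extSet_inter (compl_mem_Icc_dual hA))]
    ext x
    simp only [mem_sdiff, mem_compl_iff, mem_inter_iff]
    tauto
  rw [hQ, hP]
  ext x
  simp only [mem_union, mem_sdiff]
  tauto

theorem mem_Icc_iff [Finite α] (hMN : M.IsPerspective N) (hME : M.E = univ) (hNE : N.E = univ)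
    (hB : M.Indep B) (hBN : N.Spanning B) :
    A ∈ Icc (B \ IntSet N B) (B ∪ ExtSet M B) ↔ A \ QActSet M A ∪ PActSet N A = B := by
  refine ⟨hMN.sdiff_qActSet_union_pActSet_eq hNE hB hBN, fun h => ?_⟩
  obtain ⟨B', hB', hB'N, hA⟩ := hMN.exists_mem_Icc hME hNE A
  obtain rfl : B' = B := (hMN.sdiff_qActSet_union_pActSet_eq hNE hB' hB'N hA).symm.trans h
  exact hA

theorem indep_spanning_sdiff_qActSet_union_pActSet [Finite α] (hMN : M.IsPerspective N)
    (hME : M.E = univ) (hNE : N.E = univ) (A : Set α) :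
    M.Indep (A \ QActSet M A ∪ PActSet N A) ∧ N.Spanning (A \ QActSet M A ∪ PActSet N A) := by
  obtain ⟨B, hB, hBN, hA⟩ := hMN.exists_mem_Icc hME hNE A
  rw [hMN.sdiff_qActSet_union_pActSet_eq hNE hB hBN hA]
  exact ⟨hB, hBN⟩

theorem rk'_eq_ncard_inter [Finite α] (hMN : M.IsPerspective N) (hME : M.E = univ)
    (hB : M.Indep B) (hA : A ∈ Icc (B \ IntSet N B) (B ∪ ExtSet M B)) :
    M.rk' A = (A ∩ B).ncard :=
  (isBasis_of_sdiff_subset_extSet (hB.subset inter_subset_right) inter_subset_left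
    (hMN.sdiff_subset_extSet_inter hA) (by simp [hME])).isBasis'.rk'_eq_ncard (toFinite A)

theorem rk'_add_ncard_sdiff [Finite α] (hMN : M.IsPerspective N) (hNE : N.E = univ)
    (hBN : N.Spanning B) (hA : A ∈ Icc (B \ IntSet N B) (B ∪ ExtSet M B)) :
    N.rk' A + (B \ A).ncard = N.rk' univ := by
  have hbasis := isBasis_of_sdiff_subset_extSet
    ((hBN.dual_indep_compl hNE).subset inter_subset_right) inter_subset_left
    (hMN.dual.sdiff_subset_extSet_inter (compl_mem_Icc_dual hA)) (by simp [hNE])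
  have hdiff : Aᶜ \ (Aᶜ ∩ Bᶜ) = B \ A := by
    ext x
    simp only [mem_sdiff, mem_compl_iff, mem_inter_iff]
    tauto
  rw [← rk'_add_ncard_sdiff_of_isBasis_dual hNE hbasis, hdiff]

theorem rk'_univ_sub_rk'_eq [Finite α] (hMN : M.IsPerspective N) (hNE : N.E = univ)
    (hBN : N.Spanning B) (hA : A ∈ Icc (B \ IntSet N B) (B ∪ ExtSet M B)) :
    N.rk' univ - N.rk' A = (IntSet N B \ A).ncard := by
  have hBA : B \ A = IntSet N B \ A := by
    refine subset_antisymm (fun x hx => ⟨?_, hx.2⟩) fun x hx => ⟨hx.1.1, hx.2⟩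
    exact by_contra fun hxI => hx.2 (hA.1 ⟨hx.1, hxI⟩)
  rw [← hMN.rk'_add_ncard_sdiff hNE hBN hA, hBA, Nat.add_sub_cancel_left]

theorem ncard_sub_rk'_eq [Finite α] (hMN : M.IsPerspective N) (hME : M.E = univ)
    (hB : M.Indep B) (hA : A ∈ Icc (B \ IntSet N B) (B ∪ ExtSet M B)) :
    A.ncard - M.rk' A = (A ∩ ExtSet M B).ncard := by
  have hAB : A \ B = A ∩ ExtSet M B := by
    refine subset_antisymm (fun x hx => ⟨hx.1, (hA.2 hx.1).resolve_left hx.2⟩) ?_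
    exact fun x hx => ⟨hx.1, hx.2.1⟩
  rw [hMN.rk'_eq_ncard_inter hME hB hA, ← hAB, ← ncard_inter_add_ncard_sdiff_eq_ncard A B,
    Nat.add_sub_cancel_left]

theorem rk'_sub_sub_rk'_sub_eq [Finite α] (hMN : M.IsPerspective N) (hME : M.E = univ)
    (hNE : N.E = univ) (hB : M.Indep B) (hBN : N.Spanning B)
    (hA : A ∈ Icc (B \ IntSet N B) (B ∪ ExtSet M B)) :
    (M.rk' univ - M.rk' A) - (N.rk' univ - N.rk' A) =
      (M.rk' univ - M.rk' B) - (N.rk' univ - N.rk' B) := by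
  have hBB : B ∈ Icc (B \ IntSet N B) (B ∪ ExtSet M B) := ⟨sdiff_subset, subset_union_left⟩
  have hMA := hMN.rk'_eq_ncard_inter hME hB hA
  have hNA := hMN.rk'_add_ncard_sdiff hNE hBN hA
  have hMB := hMN.rk'_eq_ncard_inter hME hB hBB
  have hNB := hMN.rk'_add_ncard_sdiff hNE hBN hBB
  have hcard := ncard_inter_add_ncard_sdiff_eq_ncard B A
  rw [inter_self] at hMB
  rw [sdiff_self, ncard_empty] at hNB
  rw [inter_comm] at hMA
  omega

end Matroid.IsPerspective

end Activity

namespace Matroid.IsPerspective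

variable {α : Type*} [Fintype α] [LinearOrder α] {M N : Matroid α} {B : Finset α}

open scoped Classical in
theorem filter_eq_Icc (hMN : M.IsPerspective N) (hME : M.E = univ) (hNE : N.E = univ)
    (hB : M.Indep ↑B) (hBN : N.Spanning ↑B) :
    (Finset.univ.filter fun A : Finset α =>
        (↑A \ QActSet M ↑A ∪ PActSet N ↑A).toFinset = B) =
      Finset.Icc (B \ (IntSet N ↑B).toFinset) (B ∪ (ExtSet M ↑B).toFinset) := by
  ext A
  rw [Finset.mem_filter, Finset.mem_Icc, ← Finset.coe_inj, coe_toFinset,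
    ← hMN.mem_Icc_iff hME hNE hB hBN]
  simp only [Finset.mem_univ, true_and, mem_Icc, ← Finset.coe_subset, Finset.coe_sdiff,
    Finset.coe_union, coe_toFinset]

open scoped Classical in
theorem summand_eq {R : Type*} [CommRing R] (hMN : M.IsPerspective N) (hME : M.E = univ)
    (hNE : N.E = univ) (hB : M.Indep ↑B) (hBN : N.Spanning ↑B) (x y z : R) {A : Finset α}
    (hA : A ∈ Finset.Icc (B \ (IntSet N ↑B).toFinset) (B ∪ (ExtSet M ↑B).toFinset)) :
    (x - 1) ^ (N.rk' univ - N.rk' ↑A) * (y - 1) ^ (A.card - M.rk' ↑A) *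
        z ^ ((M.rk' univ - M.rk' ↑A) - (N.rk' univ - N.rk' ↑A)) =
      (x - 1) ^ ((IntSet N ↑B).toFinset \ A).card *
        (y - 1) ^ (A ∩ (ExtSet M ↑B).toFinset).card *
        z ^ ((M.rk' univ - M.rk' ↑B) - (N.rk' univ - N.rk' ↑B)) := by
  rw [← hMN.filter_eq_Icc hME hNE hB hBN, Finset.mem_filter, ← Finset.coe_inj, coe_toFinset,
    ← hMN.mem_Icc_iff hME hNE hB hBN] at hA
  rw [hMN.rk'_sub_sub_rk'_sub_eq hME hNE hB hBN hA.2, hMN.rk'_univ_sub_rk'_eq hNE hBN hA.2,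
    ← ncard_coe_finset A, hMN.ncard_sub_rk'_eq hME hB hA.2, ← ncard_coe_finset,
    ← ncard_coe_finset, Finset.coe_sdiff, Finset.coe_inter, coe_toFinset, coe_toFinset]

end Matroid.IsPerspective

open scoped Classical in
/-- The Tutte polynomial of a matroid perspective in terms of activities of subsets
independent in `M` and spanning in `N`. -/
theorem stmt4 {α : Type*} [Fintype α] [LinearOrder α] (M N : Matroid α)
    (hME : M.E = Set.univ) (hNE : N.E = Set.univ)
    (hMN : ∀ F, N.IsFlat F → M.IsFlat F)
    {R : Type*} [CommRing R] (x y z : R) :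
    ∑ A : Finset α,
        (x - 1) ^ (N.rk' Set.univ - N.rk' ↑A) *
          (y - 1) ^ (A.card - M.rk' ↑A) *
          z ^ ((M.rk' Set.univ - M.rk' ↑A) - (N.rk' Set.univ - N.rk' ↑A)) =
      ∑ B ∈ Finset.univ.filter
          (fun B : Finset α => M.Indep ↑B ∧ N.Spanning ↑B),
        x ^ (IntSet N ↑B).ncard * y ^ (ExtSet M ↑B).ncard *
          z ^ ((M.rk' Set.univ - M.rk' ↑B) - (N.rk' Set.univ - N.rk' ↑B)) := by
  classical
  have hMN' := Matroid.isPerspective_of_forall_isFlat (hME.trans hNE.symm) hMN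
  rw [← Finset.sum_fiberwise_of_maps_to
    (t := Finset.univ.filter fun B : Finset α => M.Indep ↑B ∧ N.Spanning ↑B)
    (g := fun A : Finset α => (↑A \ QActSet M ↑A ∪ PActSet N ↑A).toFinset) fun A _ => by
      rw [Finset.mem_filter, coe_toFinset]
      exact ⟨Finset.mem_univ _, hMN'.indep_spanning_sdiff_qActSet_union_pActSet hME hNE ↑A⟩]
  refine Finset.sum_congr rfl fun B hB => ?_
  obtain ⟨hBi, hBs⟩ := (Finset.mem_filter.1 hB).2
  have hIB : (IntSet N ↑B).toFinset ⊆ B := fun e he => by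
    simpa using ((mem_toFinset.1 he).1 : e ∈ (↑B : Set α))
  have hBX : Disjoint B (ExtSet M ↑B).toFinset := Finset.disjoint_right.2 fun e he => by
    simpa using ((mem_toFinset.1 he).1 : e ∉ (↑B : Set α))
  rw [hMN'.filter_eq_Icc hME hNE hBi hBs,
    Finset.sum_congr rfl fun A => hMN'.summand_eq hME hNE hBi hBs x y z, ← Finset.sum_mul,
    Finset.sum_Icc_pow_card_sdiff_mul_pow_card_inter hIB hBX, sub_add_cancel, sub_add_cancel,
    ncard_eq_toFinset_card', ncard_eq_toFinset_card']
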